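/- arXiv:2407.12181 — 4 statements merged into one kernel-verified Lean document; each statement's English description precedes it below -/
import Mathlib

section
/- For every integer n ≥ 0, one has Σ_{k=0}^{n} (−1)^{k(k+1)/2} v^{k(n−1)} ⟨n choose k⟩ = 1 if n = 0 and = 0 if n > 0, as an identity in ℚ(v). -/
/-- The indeterminate `v` in the field `ℚ(v)` of rational functions. -/
noncomputable def v : RatFunc ℚ := RatFunc.X

/-- The super quantum integer `⟨n⟩ = (v^{-n} - (-v)^n)/(v + v^{-1})`. -/
noncomputable def sInt (n : ℕ) : RatFunc ℚ :=
  (v ^ (-(n : ℤ)) - (-v) ^ (n : ℤ)) / (v + v⁻¹)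

/-- The super quantum factorial `⟨n⟩! = ∏_{i=1}^n ⟨i⟩`. -/
noncomputable def sFact (n : ℕ) : RatFunc ℚ := ∏ i ∈ Finset.range n, sInt (i + 1)

/-- The super quantum binomial `⟨n choose k⟩ = ⟨n⟩!/(⟨n-k⟩!⟨k⟩!)` (for `0 ≤ k ≤ n`). -/
noncomputable def sBinom (n k : ℕ) : RatFunc ℚ := sFact n / (sFact (n - k) * sFact k)

lemma v_ne : v ≠ 0 := RatFunc.X_ne_zero

lemma poly_ne (m : ℕ) (hm : m ≠ 0) : (1 : RatFunc ℚ) - (-1)^m * v^(2*m) ≠ 0 := by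
  have hp : (1 - (-1)^m * Polynomial.X^(2*m) : Polynomial ℚ) ≠ 0 := by
    intro h
    have := congrArg (fun p => Polynomial.coeff p 0) h
    simp [Polynomial.coeff_X_pow, hm] at this
  have := RatFunc.algebraMap_ne_zero (K := ℚ) hp
  simpa [map_sub, map_mul, map_pow, map_one, map_neg, RatFunc.algebraMap_X, v] using this

lemma vsq_ne : v^2 + 1 ≠ 0 := by
  have hp : (Polynomial.X^2 + 1 : Polynomial ℚ) ≠ 0 := by
    intro h
    have := congrArg (fun p => Polynomial.coeff p 0) h
    simp [Polynomial.coeff_X_pow] at this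
  have := RatFunc.algebraMap_ne_zero (K := ℚ) hp
  simpa [map_add, map_pow, map_one, RatFunc.algebraMap_X, v] using this

lemma D_ne : v + v⁻¹ ≠ 0 := by
  intro h
  apply vsq_ne
  have := congrArg (· * v) h
  simp only [add_mul, inv_mul_cancel₀ v_ne, zero_mul] at this
  linear_combination this

lemma sInt_eq (m : ℕ) : sInt m = ((v^m)⁻¹ - (-1)^m * v^m) / (v + v⁻¹) := by
  unfold sInt
  rw [zpow_neg, zpow_natCast, zpow_natCast, neg_pow]

lemma sInt_ne (m : ℕ) (hm : m ≠ 0) : sInt m ≠ 0 := by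
  rw [sInt_eq]
  apply div_ne_zero _ D_ne
  intro h
  apply poly_ne m hm
  have key : (1 : RatFunc ℚ) - (-1)^m * v^(2*m) = ((v^m)⁻¹ - (-1)^m * v^m) * v^m := by
    rw [sub_mul, inv_mul_cancel₀ (pow_ne_zero m v_ne), mul_assoc, ← pow_add, two_mul]
  rw [key, h, zero_mul]

lemma sFact_ne (n : ℕ) : sFact n ≠ 0 := by
  unfold sFact
  rw [Finset.prod_ne_zero_iff]
  exact fun i _ => sInt_ne (i+1) (by omega)

lemma sFact_succ (n : ℕ) : sFact (n+1) = sFact n * sInt (n+1) := Finset.prod_range_succ _ _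

lemma sFact_zero : sFact 0 = 1 := Finset.prod_range_zero _

lemma sInt_add (a b : ℕ) :
    sInt (a+b) = (v^b)⁻¹ * sInt a + (-1)^a * v^a * sInt b := by
  rw [sInt_eq, sInt_eq, sInt_eq, ← mul_div_assoc, ← mul_div_assoc, ← add_div]
  congr 1
  rw [pow_add, mul_inv]
  rw [pow_add]
  ring

lemma sBinom_zero (n : ℕ) : sBinom n 0 = 1 := by
  unfold sBinom
  simp [sFact_zero, div_self (sFact_ne n)]

lemma sBinom_self (n : ℕ) : sBinom n n = 1 := by
  unfold sBinom
  simp [sFact_zero, div_self (sFact_ne n)]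

lemma pascal (a b : ℕ) :
    sBinom (a+b+2) (b+1)
      = (v^(b+1))⁻¹ * sBinom (a+b+1) (b+1) + (-1)^(a+1) * v^(a+1) * sBinom (a+b+1) b := by
  have hA := sFact_succ a
  have hB := sFact_succ b
  have hFne : sFact (a+1) * sFact (b+1) ≠ 0 := mul_ne_zero (sFact_ne _) (sFact_ne _)
  apply mul_right_cancel₀ hFne
  have e0 : sBinom (a+b+2) (b+1) * (sFact (a+1) * sFact (b+1)) = sFact (a+b+2) := by
    unfold sBinom
    rw [show a+b+2 - (b+1) = a+1 by omega]
    exact div_mul_cancel₀ _ hFne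
  have e1 : sBinom (a+b+1) (b+1) * (sFact a * sFact (b+1)) = sFact (a+b+1) := by
    unfold sBinom
    rw [show a+b+1 - (b+1) = a by omega]
    exact div_mul_cancel₀ _ (mul_ne_zero (sFact_ne _) (sFact_ne _))
  have e2 : sBinom (a+b+1) b * (sFact (a+1) * sFact b) = sFact (a+b+1) := by
    unfold sBinom
    rw [show a+b+1 - b = a+1 by omega]
    exact div_mul_cancel₀ _ (mul_ne_zero (sFact_ne _) (sFact_ne _))
  have e3 : sFact (a+b+2) = sFact (a+b+1) *
      ((v^(b+1))⁻¹ * sInt (a+1) + (-1)^(a+1) * v^(a+1) * sInt (b+1)) := by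
    rw [show a+b+2 = (a+b+1)+1 by omega, sFact_succ (a+b+1),
        show (a+b+1)+1 = (a+1)+(b+1) by omega, sInt_add (a+1) (b+1)]
  rw [e0, e3]
  linear_combination -((v^(b+1))⁻¹ * sInt (a+1)) * e1
    - ((v^(b+1))⁻¹ * sBinom (a+b+1) (b+1) * sFact (b+1)) * hA
    - ((-1)^(a+1) * v^(a+1) * sInt (b+1)) * e2
    - ((-1)^(a+1) * v^(a+1) * sBinom (a+b+1) b * sFact (a+1)) * hB

noncomputable def F (n k : ℕ) : RatFunc ℚ :=
  (-1 : RatFunc ℚ) ^ (k * (k + 1) / 2) * v ^ ((k : ℤ) * ((n : ℤ) - 1)) * sBinom n k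

lemma tri (k : ℕ) : (k+1) * ((k+1) + 1) / 2 = k * (k+1) / 2 + (k+1) := by
  obtain ⟨c, hc⟩ := Nat.even_mul_succ_self k
  have h : (k+1) * ((k+1)+1) = k*(k+1) + 2*(k+1) := by ring
  omega

lemma F_zero (n : ℕ) : F n 0 = 1 := by
  simp [F, sBinom_zero]

lemma Fedge (n : ℕ) : F (n+1) (n+1) = (-1)^(n+1) * v^(2*n) * F n n := by
  unfold F
  rw [sBinom_self, sBinom_self, mul_one, mul_one, tri n, pow_add]
  rw [← zpow_natCast v (2*n)]
  have hz : v^((2*n:ℕ):ℤ) * v^((n:ℤ)*((n:ℤ)-1)) = v^(((n+1:ℕ):ℤ) * (((n+1:ℕ):ℤ) - 1)) := by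
    rw [← zpow_add₀ v_ne]
    congr 1
    push_cast
    ring
  linear_combination ((-1:RatFunc ℚ)^(n*(n+1)/2) * (-1)^n) * hz

lemma Fsucc (n k : ℕ) (h : k < n) :
    F (n+1) (k+1) = F n (k+1) + (-1)^(n+1) * v^(2*n) * F n k := by
  obtain ⟨a, rfl⟩ : ∃ a, n = a + k + 1 := ⟨n - k - 1, by omega⟩
  unfold F
  rw [show a+k+1+1 = a+k+2 by rfl, pascal a k]
  have g1 : v ^ (((k+1:ℕ):ℤ) * (((a+k+2:ℕ):ℤ) - 1)) * (v^(k+1))⁻¹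
      = v ^ (((k+1:ℕ):ℤ) * (((a+k+1:ℕ):ℤ) - 1)) := by
    rw [← zpow_natCast v (k+1), ← zpow_neg, ← zpow_add₀ v_ne]
    congr 1
    push_cast
    ring
  have g2 : v ^ (((k+1:ℕ):ℤ) * (((a+k+2:ℕ):ℤ) - 1)) * v^(a+1)
      = v^(2*(a+k+1)) * v ^ (((k:ℕ):ℤ) * (((a+k+1:ℕ):ℤ) - 1)) := by
    rw [← zpow_natCast v (a+1), ← zpow_natCast v (2*(a+k+1)), ← zpow_add₀ v_ne,
        ← zpow_add₀ v_ne]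
    congr 1
    push_cast
    ring
  have s1 : ((-1 : RatFunc ℚ)) ^ ((k+1) * ((k+1) + 1) / 2) = (-1)^(k*(k+1)/2) * (-1)^(k+1) := by
    rw [tri k, pow_add]
  have s2 : ((-1 : RatFunc ℚ)) ^ (a+k+1+1) = (-1)^(a+1) * (-1)^(k+1) := by
    rw [← pow_add]
    congr 1
    omega
  linear_combination (sBinom (a+k+1) (k+1)) * ((-1:RatFunc ℚ))^((k+1)*((k+1)+1)/2) * g1
    + (sBinom (a+k+1) k) * ((-1:RatFunc ℚ))^((k+1)*((k+1)+1)/2) * (-1:RatFunc ℚ)^(a+1) * g2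
    + (sBinom (a+k+1) k) * v^(2*(a+k+1)) * v ^ (((k:ℕ):ℤ) * (((a+k+1:ℕ):ℤ) - 1)) * (s1 * (-1:RatFunc ℚ)^(a+1) - s2 * (-1)^(k*(k+1)/2))

lemma step (n : ℕ) :
    ∑ k ∈ Finset.range (n+2), F (n+1) k
      = (1 + (-1)^(n+1) * v^(2*n)) * ∑ k ∈ Finset.range (n+1), F n k := by
  rw [Finset.sum_range_succ, Finset.sum_range_succ']
  rw [Finset.sum_congr rfl (fun k hk => Fsucc n k (Finset.mem_range.mp hk)),
      Finset.sum_add_distrib, ← Finset.mul_sum, F_zero, Fedge]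
  have h1 : ∑ k ∈ Finset.range (n+1), F n k = (∑ k ∈ Finset.range n, F n (k+1)) + F n 0 :=
    Finset.sum_range_succ' _ _
  have h2 : ∑ k ∈ Finset.range (n+1), F n k = (∑ k ∈ Finset.range n, F n k) + F n n :=
    Finset.sum_range_succ _ _
  rw [F_zero] at h1
  linear_combination (-1 : RatFunc ℚ) * h1 - ((-1 : RatFunc ℚ)^(n+1) * v^(2*n)) * h2


/-- `Σ_{k=0}^{n} (−1)^{k(k+1)/2} v^{k(n−1)} ⟨n choose k⟩` equals `1` if `n = 0` and `0` if
`n > 0`. -/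
theorem statement2 (n : ℕ) :
    ∑ k ∈ Finset.range (n + 1),
        (-1 : RatFunc ℚ) ^ (k * (k + 1) / 2) * v ^ ((k : ℤ) * ((n : ℤ) - 1)) * sBinom n k
      = if n = 0 then 1 else 0 := by
  show ∑ k ∈ Finset.range (n+1), F n k = if n = 0 then 1 else 0
  induction n with
  | zero => simp [F, sBinom_zero]
  | succ m ih =>
    rw [show m+1+1 = m+2 from rfl, step m, ih]
    cases m with
    | zero => norm_num
    | succ j => simp
end

section
/- Assume r ≠ 4. For every λ ∈ ℂ and every integer s with e^{4π√−1·s/r} = 1, one has Σ_{i=0}^{r̄−1} (−1)^i e^{(2π√−1/r)(1−s)(λ+r̄−1−2i)} = 0. (This is the vanishing of the quantum dimension of the Verma modules V_{(λ,p̄)} over the restricted unrolled quantum group of osp(1|2), computed with the pivotal structure indexed by s.) -/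
/-- `r̄ = 2r` if `r` is odd, `r` if `r ≡ 2 (mod 4)`, `r/2` if `r ≡ 0 (mod 8)`,
and `r/4` if `r ≡ 4 (mod 8)`. -/
def rbar (r : ℕ) : ℕ :=
  if r % 2 = 1 then 2 * r
  else if r % 4 = 2 then r
  else if r % 8 = 0 then r / 2
  else r / 4

/-- Vanishing of quantum dimensions of Verma modules: if `r ≠ 4`, `λ ∈ ℂ`, and `s ∈ ℤ`
satisfies `e^{4π√−1·s/r} = 1`, then
`Σ_{i=0}^{r̄−1} (−1)^i e^{(2π√−1/r)(1−s)(λ+r̄−1−2i)} = 0`. -/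
theorem statement8 (r : ℕ) (hr : 3 ≤ r) (hne : r ≠ 4) (lam : ℂ) (s : ℤ)
    (hs : Complex.exp (4 * Real.pi * Complex.I * (s : ℂ) / (r : ℂ)) = 1) :
    ∑ i ∈ Finset.range (rbar r),
        (-1 : ℂ) ^ i *
          Complex.exp ((2 * Real.pi * Complex.I / (r : ℂ)) * (1 - (s : ℂ)) *
            (lam + (rbar r : ℂ) - 1 - 2 * (i : ℂ))) = 0 := by
  have hr0 : (r : ℂ) ≠ 0 := Nat.cast_ne_zero.2 (by omega)
  set c : ℂ := (2 * Real.pi * Complex.I / (r : ℂ)) * (1 - (s : ℂ)) with hc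
  set R := rbar r with hRdef
  set x : ℂ := Complex.exp (-(4 * Real.pi * Complex.I / (r : ℂ))) with hxdef
  have hx : Complex.exp (-(2 * c)) = x := by
    have h1 : -(2 * c) = -(4 * Real.pi * Complex.I / (r : ℂ))
        + 4 * Real.pi * Complex.I * (s : ℂ) / (r : ℂ) := by
      rw [hc]; field_simp; ring
    rw [h1, Complex.exp_add, hs, mul_one, hxdef]
  set E : ℂ := Complex.exp (c * (lam + (R : ℂ) - 1)) with hEdef
  have key : ∀ i : ℕ, (-1 : ℂ) ^ i * Complex.exp (c * (lam + (R : ℂ) - 1 - 2 * (i : ℂ)))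
      = E * (-x) ^ i := by
    intro i
    have h1 : c * (lam + (R : ℂ) - 1 - 2 * (i : ℂ))
        = c * (lam + (R : ℂ) - 1) + (i : ℂ) * (-(2 * c)) := by ring
    rw [h1, Complex.exp_add, Complex.exp_nat_mul, hx, neg_pow, hEdef]
    ring
  have hsum : ∑ i ∈ Finset.range R,
      (-1 : ℂ) ^ i * Complex.exp (c * (lam + (R : ℂ) - 1 - 2 * (i : ℂ)))
      = E * ∑ i ∈ Finset.range R, (-x) ^ i := by
    rw [Finset.mul_sum]
    exact Finset.sum_congr rfl fun i _ => key i
  -- x ≠ -1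
  have hx1 : -x ≠ 1 := by
    intro h
    have hxm : x = -1 := by linear_combination -h
    have hone : Complex.exp (-(4 * Real.pi * Complex.I / (r : ℂ)) + Real.pi * Complex.I) = 1 := by
      rw [Complex.exp_add, Complex.exp_mul_I, Complex.cos_pi, Complex.sin_pi, ← hxdef, hxm]
      ring
    obtain ⟨n, hn⟩ := Complex.exp_eq_one_iff.1 hone
    have hπI : (Real.pi : ℂ) * Complex.I ≠ 0 :=
      mul_ne_zero (Complex.ofReal_ne_zero.2 Real.pi_ne_zero) Complex.I_ne_zero
    have hcancel : ((r : ℂ) - 4) * ((Real.pi : ℂ) * Complex.I)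
        = (2 * (n : ℂ) * (r : ℂ)) * ((Real.pi : ℂ) * Complex.I) := by
      field_simp at hn
      linear_combination ((Real.pi : ℂ) * Complex.I) * hn
    have hC : (r : ℂ) - 4 = 2 * (n : ℂ) * (r : ℂ) := mul_right_cancel₀ hπI hcancel
    have hZ : (r : ℤ) - 4 = 2 * n * (r : ℤ) := by exact_mod_cast hC
    have hdvd : (r : ℤ) ∣ 4 := ⟨1 - 2 * n, by linarith [hZ]⟩
    have hle : (r : ℤ) ≤ 4 := Int.le_of_dvd (by norm_num) hdvd
    have hr3 : r = 3 := by omega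
    rw [hr3] at hZ
    omega
  -- (-x)^R = 1
  have hxR : (-x) ^ R = 1 := by
    rw [neg_pow, hxdef, ← Complex.exp_nat_mul]
    rcases Nat.even_or_odd r with hev | hod
    · -- r even
      rcases hev with ⟨k, hk⟩
      have hmod : r % 2 = 0 := by omega
      by_cases h4 : r % 4 = 2
      · have hR : R = r := by rw [hRdef, rbar]; simp [hmod, h4]
        have harg : (R : ℂ) * -(4 * Real.pi * Complex.I / (r : ℂ)) = (-2 : ℤ) * (2 * Real.pi * Complex.I) := by
          rw [hR]; push_cast; field_simp; ring
        rw [harg, Complex.exp_int_mul_two_pi_mul_I, mul_one, hR]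
        have : Even r := ⟨k, by omega⟩
        exact this.neg_one_pow
      · by_cases h8 : r % 8 = 0
        · obtain ⟨m, hm⟩ : ∃ m, r = 8 * m := ⟨r / 8, by omega⟩
          have hR : R = 4 * m := by rw [hRdef, rbar]; simp [hmod, h4, h8]; omega
          have hm0 : (m : ℂ) ≠ 0 := Nat.cast_ne_zero.2 (by omega)
          have harg : (R : ℂ) * -(4 * Real.pi * Complex.I / (r : ℂ)) = (-1 : ℤ) * (2 * Real.pi * Complex.I) := by
            rw [hR, hm]; push_cast; field_simp; ring
          rw [harg, Complex.exp_int_mul_two_pi_mul_I, mul_one, hR]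
          exact (Even.neg_one_pow ⟨2 * m, by ring⟩)
        · -- r % 8 = 4, r ≠ 4 so r ≥ 12
          obtain ⟨m, hm⟩ : ∃ m, r = 4 * (2 * m + 1) := ⟨(r - 4) / 8, by omega⟩
          have hR : R = 2 * m + 1 := by
            rw [hRdef, rbar]
            have h42 : r % 4 ≠ 2 := h4
            simp [hmod, h42, h8]
            omega
          have hm0 : ((2 : ℂ) * m + 1) ≠ 0 := by
            have h0 : ((2 * m + 1 : ℕ) : ℂ) ≠ 0 := Nat.cast_ne_zero.2 (by omega)
            push_cast at h0; exact h0
          have harg : (R : ℂ) * -(4 * Real.pi * Complex.I / (r : ℂ)) = -(Real.pi * Complex.I) := by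
            rw [hR, hm]; push_cast; field_simp [hm0]
          rw [harg]
          have hexp : Complex.exp (-(Real.pi * Complex.I)) = -1 := by
            rw [Complex.exp_neg, Complex.exp_mul_I, Complex.cos_pi, Complex.sin_pi]
            norm_num
          rw [hexp, hR]
          have : Odd (2 * m + 1) := ⟨m, by ring⟩
          rw [this.neg_one_pow]
          ring
    · -- r odd
      have hmod : r % 2 = 1 := Nat.odd_iff.1 hod
      have hR : R = 2 * r := by rw [hRdef, rbar]; simp [hmod]
      have harg : (R : ℂ) * -(4 * Real.pi * Complex.I / (r : ℂ)) = (-4 : ℤ) * (2 * Real.pi * Complex.I) := by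
        rw [hR]; push_cast; field_simp
      rw [harg, Complex.exp_int_mul_two_pi_mul_I, mul_one, hR]
      exact Even.neg_one_pow ⟨r, by ring⟩
  rw [hsum, geom_sum_eq hx1, hxR, sub_self, zero_div, mul_zero]
end

section
/- Let Γ be a finite tree. For every l : V(Γ) → ℤ, the coefficients F^±_l := ∏_{v∈V(Γ)} c^±_{deg v}(l_v) satisfy F^+_l = −(√−1)^{Σ_{v∈V(Γ)} l_v} · F^−_l. -/
/-- The variable `X` in the field `ℂ((X))` of formal Laurent series. -/
noncomputable def Xl : LaurentSeries ℂ := HahnSeries.single 1 1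

/-- `c^+_d(l)`: the coefficient of `X^l` in `(X + X^{−1})^{2−d}`. -/
noncomputable def cplus (d : ℕ) (l : ℤ) : ℂ := ((Xl + Xl⁻¹) ^ ((2 : ℤ) - d)).coeff l

/-- `c^−_d(l)`: the coefficient of `X^l` in `(X − X^{−1})^{2−d}`. -/
noncomputable def cminus (d : ℕ) (l : ℤ) : ℂ := ((Xl - Xl⁻¹) ^ ((2 : ℤ) - d)).coeff l

open Complex Finset

namespace Statement13Aux

/-- The coefficient-twisting map corresponding to `X ↦ i·X`. -/
noncomputable def Tfun (f : LaurentSeries ℂ) : LaurentSeries ℂ :=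
  ⟨fun n => Complex.I ^ n * f.coeff n, by
    refine f.isPWO_support'.mono fun n hn => ?_
    simp only [Function.mem_support, ne_eq] at hn ⊢
    exact fun h => hn (by rw [h, mul_zero])⟩

lemma Tfun_coeff (f : LaurentSeries ℂ) (n : ℤ) :
    (Tfun f).coeff n = Complex.I ^ n * f.coeff n := rfl

lemma Tfun_support (f : LaurentSeries ℂ) : (Tfun f).support = f.support := by
  ext n
  simp [HahnSeries.mem_support, Tfun_coeff, mul_ne_zero_iff,
    zpow_ne_zero _ Complex.I_ne_zero]

/-- `Tfun` as a ring homomorphism. -/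
noncomputable def T : LaurentSeries ℂ →+* LaurentSeries ℂ where
  toFun := Tfun
  map_one' := by
    ext n
    rw [Tfun_coeff]
    rcases eq_or_ne n 0 with h | h
    · subst h; simp
    · simp [HahnSeries.coeff_one, h]
  map_mul' f g := by
    ext n
    rw [Tfun_coeff, HahnSeries.coeff_mul, HahnSeries.coeff_mul, Finset.mul_sum]
    have hset : Finset.antidiagonal f.isPWO_support g.isPWO_support n
        = Finset.antidiagonal (Tfun f).isPWO_support (Tfun g).isPWO_support n := by
      ext ⟨a, b⟩
      simp [Finset.mem_addAntidiagonal, Tfun_support]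
    rw [hset]
    refine Finset.sum_congr rfl fun ij hij => ?_
    rw [Finset.mem_addAntidiagonal] at hij
    obtain ⟨-, -, hab⟩ := hij
    rw [Tfun_coeff, Tfun_coeff, ← hab, zpow_add₀ Complex.I_ne_zero]
    ring
  map_zero' := by
    ext n
    rw [Tfun_coeff]
    simp
  map_add' f g := by
    ext n
    rw [Tfun_coeff]
    simp [Tfun_coeff, mul_add]

lemma T_coeff (f : LaurentSeries ℂ) (n : ℤ) :
    (T f).coeff n = Complex.I ^ n * f.coeff n := rfl

/-- The constant Laurent series `i`. -/
noncomputable def CI : LaurentSeries ℂ := HahnSeries.C Complex.I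

lemma CI_mul_coeff (f : LaurentSeries ℂ) (n : ℤ) :
    (CI * f).coeff n = Complex.I * f.coeff n := by
  rw [CI, HahnSeries.C_mul_eq_smul, HahnSeries.coeff_smul, smul_eq_mul]

lemma T_Xl : T Xl = CI * Xl := by
  ext n
  rw [T_coeff, CI_mul_coeff]
  rcases eq_or_ne n 1 with h | h
  · subst h; simp [Xl]
  · simp [Xl, HahnSeries.coeff_single, h]

lemma T_CI : T CI = CI := by
  ext n
  rw [T_coeff]
  rcases eq_or_ne n 0 with h | h
  · subst h; simp [CI, HahnSeries.C_apply]
  · simp [CI, HahnSeries.C_apply, HahnSeries.coeff_single, h]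

lemma T_Xl_inv : T Xl⁻¹ = -(CI * Xl⁻¹) := by
  rw [map_inv₀, T_Xl, mul_inv, CI, ← map_inv₀ (HahnSeries.C : ℂ →+* HahnSeries ℤ ℂ),
    Complex.inv_I, map_neg]
  ring

lemma T_gplus : T (Xl + Xl⁻¹) = CI * (Xl - Xl⁻¹) := by
  rw [map_add, T_Xl, T_Xl_inv, mul_sub]
  ring

lemma T_gminus : T (Xl - Xl⁻¹) = CI * (Xl + Xl⁻¹) := by
  rw [map_sub, T_Xl, T_Xl_inv, mul_add]
  ring

lemma CI_zpow_mul_coeff (z : ℤ) (f : LaurentSeries ℂ) (n : ℤ) :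
    (CI ^ z * f).coeff n = Complex.I ^ z * f.coeff n := by
  have : CI ^ z = HahnSeries.C (Complex.I ^ z) := by
    rw [CI, ← map_zpow₀ (HahnSeries.C : ℂ →+* HahnSeries ℤ ℂ)]
  rw [this, HahnSeries.C_mul_eq_smul, HahnSeries.coeff_smul, smul_eq_mul]

/-- Key identity: `c⁺_d(l) = i^(2−d−l) · c⁻_d(l)`. -/
lemma key (d : ℕ) (l : ℤ) :
    cplus d l = Complex.I ^ ((2 : ℤ) - d - l) * cminus d l := by
  have h : Complex.I ^ l * cplus d l = Complex.I ^ ((2 : ℤ) - d) * cminus d l := by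
    have h1 : T ((Xl + Xl⁻¹) ^ ((2 : ℤ) - d))
        = CI ^ ((2 : ℤ) - d) * (Xl - Xl⁻¹) ^ ((2 : ℤ) - d) := by
      rw [map_zpow₀, T_gplus, mul_zpow]
    have h2 := congrArg (fun f : LaurentSeries ℂ => f.coeff l) h1
    simpa only [T_coeff, CI_zpow_mul_coeff, cplus, cminus] using h2
  have hl : Complex.I ^ l ≠ 0 := zpow_ne_zero _ Complex.I_ne_zero
  have : Complex.I ^ ((2 : ℤ) - d - l) = Complex.I ^ ((2 : ℤ) - d) * (Complex.I ^ l)⁻¹ := by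
    rw [← zpow_neg, ← zpow_add₀ Complex.I_ne_zero]
    ring_nf
  rw [this]
  field_simp
  linear_combination h

/-- Parity: if `c⁻_d(l) ≠ 0` then `l ≡ 2 − d (mod 2)`. -/
lemma parity (d : ℕ) (l : ℤ) (h : cminus d l ≠ 0) : Even (l - ((2 : ℤ) - d)) := by
  have hTT : T (T ((Xl - Xl⁻¹) ^ ((2 : ℤ) - d)))
      = HahnSeries.C ((-1 : ℂ) ^ ((2 : ℤ) - d)) * (Xl - Xl⁻¹) ^ ((2 : ℤ) - d) := by
    rw [map_zpow₀, T_gminus, map_zpow₀, map_mul, T_CI, T_gplus, ← mul_assoc, mul_zpow]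
    congr 1
    rw [show CI * CI = HahnSeries.C (-1 : ℂ) from by rw [CI, ← map_mul, Complex.I_mul_I],
      ← map_zpow₀ (HahnSeries.C : ℂ →+* HahnSeries ℤ ℂ)]
  have h2 := congrArg (fun f : LaurentSeries ℂ => f.coeff l) hTT
  simp only [T_coeff, HahnSeries.C_mul_eq_smul, HahnSeries.coeff_smul, smul_eq_mul] at h2
  have h3 : Complex.I ^ l * Complex.I ^ l = (-1 : ℂ) ^ l := by
    rw [← zpow_add₀ Complex.I_ne_zero, show l + l = 2 * l by ring, zpow_mul,
      show (Complex.I ^ (2 : ℤ)) = -1 by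
        rw [show (2 : ℤ) = ((2 : ℕ) : ℤ) by norm_num, zpow_natCast, Complex.I_sq]]
  have h4 : (-1 : ℂ) ^ l = (-1 : ℂ) ^ ((2 : ℤ) - d) := by
    have := h2
    rw [← mul_assoc, h3] at this
    exact mul_right_cancel₀ h this
  by_contra hodd
  rw [Int.not_even_iff_odd] at hodd
  have h5 : (-1 : ℂ) ^ (l - ((2 : ℤ) - d)) = -1 := hodd.neg_one_zpow
  rw [zpow_sub₀ (by norm_num : (-1 : ℂ) ≠ 0), h4, div_self
    (zpow_ne_zero _ (by norm_num : (-1 : ℂ) ≠ 0))] at h5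
  norm_num at h5

lemma zpow_finset_sum {α : Type*} (a : ℂ) (ha : a ≠ 0) {s : Finset α} {f : α → ℤ} :
    ∏ i ∈ s, a ^ f i = a ^ (∑ i ∈ s, f i) := by
  classical
  induction s using Finset.cons_induction with
  | empty => simp
  | cons x s hx ih => rw [Finset.sum_cons, Finset.prod_cons, zpow_add₀ ha, ih]

end Statement13Aux

/-- For a finite tree `Γ` and `l : V(Γ) → ℤ`, the coefficients
`F^±_l = ∏_v c^±_{deg v}(l_v)` satisfy `F^+_l = −(√−1)^{Σ_v l_v} · F^−_l`. -/
theorem statement13 {V : Type} [Fintype V] [Nonempty V]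
    (G : SimpleGraph V) [DecidableRel G.Adj] (hG : G.IsTree) (l : V → ℤ) :
    ∏ v, cplus (G.degree v) (l v)
      = -(Complex.I ^ (∑ v, l v)) * ∏ v, cminus (G.degree v) (l v) := by
  classical
  open Statement13Aux in
  by_cases hz : ∃ v, cminus (G.degree v) (l v) = 0
  · obtain ⟨v, hv⟩ := hz
    have h1 : ∏ v, cminus (G.degree v) (l v) = 0 :=
      Finset.prod_eq_zero (Finset.mem_univ v) hv
    have h2 : ∏ v, cplus (G.degree v) (l v) = 0 :=
      Finset.prod_eq_zero (Finset.mem_univ v) (by rw [key, hv, mul_zero])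
    rw [h1, h2, mul_zero]
  · push_neg at hz
    have hdeg : (∑ v, (G.degree v : ℤ)) = 2 * ((Fintype.card V : ℤ) - 1) := by
      have h1 := G.sum_degrees_eq_twice_card_edges
      have h2 := hG.card_edgeFinset
      have h4 := congrArg (fun n : ℕ => (n : ℤ)) h1
      have h5 := congrArg (fun n : ℕ => (n : ℤ)) h2
      push_cast at h4 h5
      rw [h4, ← h5]
      ring
    have hsum : (∑ v, ((2 : ℤ) - G.degree v - l v)) = 2 - ∑ v, l v := by
      rw [Finset.sum_sub_distrib, Finset.sum_sub_distrib, hdeg, Finset.sum_const,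
        Finset.card_univ, nsmul_eq_mul]
      ring
    have hkey : ∏ v, cplus (G.degree v) (l v)
        = Complex.I ^ ((2 : ℤ) - ∑ v, l v) * ∏ v, cminus (G.degree v) (l v) := by
      rw [← hsum]
      calc ∏ v, cplus (G.degree v) (l v)
          = ∏ v, (Complex.I ^ ((2 : ℤ) - G.degree v - l v) * cminus (G.degree v) (l v)) :=
            Finset.prod_congr rfl fun v _ => key _ _
        _ = (∏ v, Complex.I ^ ((2 : ℤ) - G.degree v - l v))
              * ∏ v, cminus (G.degree v) (l v) := Finset.prod_mul_distrib
        _ = Complex.I ^ (∑ v, ((2 : ℤ) - G.degree v - l v))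
              * ∏ v, cminus (G.degree v) (l v) := by
            rw [zpow_finset_sum _ Complex.I_ne_zero]
    have hev : Even (∑ v, l v) := by
      have h4 : ∀ v : V, Even (l v - ((2 : ℤ) - G.degree v)) :=
        fun v => parity _ _ (hz v)
      have h5 : Even (∑ v, (l v - ((2 : ℤ) - G.degree v))) := by
        rw [even_iff_two_dvd]
        exact Finset.dvd_sum fun v _ => (h4 v).two_dvd
      have h6 : (∑ v, l v) = (∑ v, (l v - ((2 : ℤ) - G.degree v))) + 2 := by
        have : ∑ v, (l v - ((2 : ℤ) - G.degree v))
            = (∑ v, l v) - ∑ v, ((2 : ℤ) - G.degree v) := Finset.sum_sub_distrib _ _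
        have h7 : (∑ v : V, ((2 : ℤ) - G.degree v)) = 2 := by
          rw [Finset.sum_sub_distrib, hdeg, Finset.sum_const, Finset.card_univ,
            nsmul_eq_mul]
          ring
        rw [this, h7]
        ring
      rw [h6]
      exact h5.add (by decide)
    have hS2 : Complex.I ^ (∑ v, l v) * Complex.I ^ (∑ v, l v) = 1 := by
      obtain ⟨k, hk⟩ := hev
      rw [← zpow_add₀ Complex.I_ne_zero, hk, show k + k + (k + k) = 4 * k by ring,
        zpow_mul, show (Complex.I ^ (4 : ℤ)) = 1 by
          rw [show (4 : ℤ) = ((4 : ℕ) : ℤ) by norm_num, zpow_natCast, Complex.I_pow_four],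
        one_zpow]
    have hinv : (Complex.I ^ (∑ v, l v))⁻¹ = Complex.I ^ (∑ v, l v) :=
      inv_eq_of_mul_eq_one_left hS2
    have hI : Complex.I ^ ((2 : ℤ) - ∑ v, l v) = -(Complex.I ^ (∑ v, l v)) := by
      rw [zpow_sub₀ Complex.I_ne_zero, div_eq_mul_inv, hinv,
        show (Complex.I ^ (2 : ℤ)) = -1 by
          rw [show (2 : ℤ) = ((2 : ℕ) : ℤ) by norm_num, zpow_natCast, Complex.I_sq],
        neg_one_mul]
    rw [hkey, hI]
end

section
/- Let Γ be a finite tree with integer vertex weights f : V(Γ) → ℤ and plumbing matrix B (B_{vv} = f_v, B_{vw} = 1 if {v,w} is an edge and 0 otherwise for v ≠ w). Let s : V(Γ) → ℤ satisfy Σ_j B_{ij} s_j ≡ B_{ii} (mod 2) for all i, and let b : V(Γ) → ℤ. Then for every k : V(Γ) → ℤ, setting l = 2b + B(s − 𝟙) + 2Bk : V(Γ) → ℤ, one has F^+_l = −(√−1)^{(2b+B(s−𝟙))^t 𝟙} · (−1)^{−k^t B k + k^t(2b+B(s−𝟙))} · F^−_l. (This is the coefficientwise identity underlying the relation Ẑ^{osp(1|2)}_{s}(M;q)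 = C_{s} q^{Δ_s} Σ_n a_n q^n versus Ẑ^{sl(2)}_{s}(M;q) = q^{Δ_s} Σ_n a_n (−q)^n between the homological blocks of the plumbed 3-manifold M determined by Γ.) -/
/-- Coefficient rescaling `f(X) ↦ f(iX)` on Laurent series. -/
noncomputable def resc (x : LaurentSeries ℂ) : LaurentSeries ℂ where
  coeff := fun n => Complex.I ^ n * x.coeff n
  isPWO_support' := x.isPWO_support.mono (fun n hn => by
    simp only [Function.mem_support] at hn ⊢
    intro h; exact hn (by rw [h, mul_zero]))

@[simp] lemma resc_coeff (x : LaurentSeries ℂ) (n : ℤ) :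
    (resc x).coeff n = Complex.I ^ n * x.coeff n := rfl

lemma resc_support (x : LaurentSeries ℂ) : (resc x).support = x.support := by
  ext n
  simp [HahnSeries.mem_support, mul_eq_zero, zpow_ne_zero n Complex.I_ne_zero]

noncomputable def rescHom : LaurentSeries ℂ →+* LaurentSeries ℂ where
  toFun := resc
  map_one' := by
    ext n
    rcases eq_or_ne n 0 with h | h <;> simp [HahnSeries.coeff_one, h]
  map_mul' := fun x y => by
    ext n
    have hset : Finset.antidiagonal (resc x).isPWO_support (resc y).isPWO_support n
        = Finset.antidiagonal x.isPWO_support y.isPWO_support n := by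
      ext p
      simp only [Finset.mem_addAntidiagonal, resc_support]
    rw [resc_coeff, HahnSeries.coeff_mul, HahnSeries.coeff_mul, hset, Finset.mul_sum]
    refine Finset.sum_congr rfl (fun p hp => ?_)
    have hpn : p.1 + p.2 = n := (Finset.mem_addAntidiagonal.mp hp).2.2
    rw [resc_coeff, resc_coeff, ← hpn, zpow_add₀ Complex.I_ne_zero]
    ring
  map_zero' := by ext n; simp
  map_add' := fun x y => by ext n; simp [mul_add]

lemma rescHom_Xl : rescHom Xl = HahnSeries.C Complex.I * Xl := by
  ext n
  rw [HahnSeries.C_mul_eq_smul, HahnSeries.coeff_smul]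
  rcases eq_or_ne n 1 with h | h <;>
    simp [rescHom, Xl, h, HahnSeries.coeff_single_same, HahnSeries.coeff_single_of_ne]

lemma key (d : ℕ) (l : ℤ) :
    cplus d l = Complex.I ^ ((2:ℤ) - d - l) * cminus d l := by
  have hI : (Complex.I : ℂ) ≠ 0 := Complex.I_ne_zero
  have h1 : rescHom ((Xl + Xl⁻¹) ^ ((2 : ℤ) - d))
      = HahnSeries.C (Complex.I ^ ((2:ℤ) - d)) * (Xl - Xl⁻¹) ^ ((2 : ℤ) - d) := by
    rw [map_zpow₀, map_add, map_inv₀, rescHom_Xl, map_zpow₀]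
    have : (HahnSeries.C Complex.I * Xl) + (HahnSeries.C Complex.I * Xl)⁻¹
        = HahnSeries.C Complex.I * (Xl - Xl⁻¹) := by
      rw [mul_inv, ← map_inv₀ HahnSeries.C, Complex.inv_I, map_neg]
      ring
    rw [this, mul_zpow]
  have h2 : Complex.I ^ l * cplus d l = Complex.I ^ ((2:ℤ) - d) * cminus d l := by
    have hc := congrArg (fun g : LaurentSeries ℂ => g.coeff l) h1
    rw [HahnSeries.C_mul_eq_smul, HahnSeries.coeff_smul, smul_eq_mul] at hc
    exact hc
  have h3 : Complex.I ^ l ≠ 0 := zpow_ne_zero _ hI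
  apply mul_left_cancel₀ h3
  rw [← mul_assoc, ← zpow_add₀ hI]
  rw [show l + ((2:ℤ) - d - l) = (2:ℤ) - d by ring]
  exact h2

section aux

lemma prod_I_zpow {V : Type} (s : Finset V) (e : V → ℤ) :
    ∏ v ∈ s, Complex.I ^ (e v) = Complex.I ^ (∑ v ∈ s, e v) := by
  classical
  induction s using Finset.cons_induction with
  | empty => simp
  | cons a s ha ih =>
      rw [Finset.prod_cons, Finset.sum_cons, ih, zpow_add₀ Complex.I_ne_zero]

lemma I_zpow_two : Complex.I ^ (2:ℤ) = -1 := by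
  rw [show (2:ℤ) = ((2:ℕ):ℤ) from rfl, zpow_natCast, Complex.I_sq]

lemma I_zpow_add_four (a m : ℤ) : Complex.I ^ (a + 4 * m) = Complex.I ^ a := by
  have h4 : Complex.I ^ (4:ℤ) = 1 := by
    rw [show (4:ℤ) = (2:ℤ) + 2 from rfl, zpow_add₀ Complex.I_ne_zero, I_zpow_two]
    norm_num
  rw [zpow_add₀ Complex.I_ne_zero, zpow_mul, h4, one_zpow, mul_one]

lemma sum_sym_zmod {V : Type} [Fintype V] [DecidableEq V] (a : V → V → ZMod 2)
    (hsym : ∀ i j, a i j = a j i) : (∑ i, ∑ j, a i j) = ∑ i, a i i := by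
  classical
  have hsplit : ∀ i : V, (∑ j, a i j) = a i i + ∑ j ∈ Finset.univ.erase i, a i j :=
    fun i => (Finset.add_sum_erase _ _ (Finset.mem_univ i)).symm
  rw [Finset.sum_congr rfl (fun i _ => hsplit i), Finset.sum_add_distrib]
  have hoff : (∑ i : V, ∑ j ∈ Finset.univ.erase i, a i j) = 0 := by
    rw [Finset.sum_sigma']
    refine Finset.sum_involution (fun p _ => ⟨p.2, p.1⟩) ?_ ?_ ?_ ?_
    · intro p hp
      rw [hsym]
      exact CharTwo.add_self_eq_zero _
    · intro p hp _
      simp only [Finset.mem_sigma, Finset.mem_univ, Finset.mem_erase, true_and, and_true] at hp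
      intro h
      exact hp (congrArg Sigma.fst h)
    · intro p hp
      simp only [Finset.mem_sigma, Finset.mem_univ, Finset.mem_erase, true_and, and_true] at hp ⊢
      exact Ne.symm hp
    · intro p hp; rfl
  rw [hoff, add_zero]

end aux

/-- The plumbing matrix of a weighted graph: `B_{vv} = f_v`, `B_{vw} = 1` if `{v,w}` is an
edge and `0` otherwise (`v ≠ w`). -/
def plumbing {V : Type} [DecidableEq V] (G : SimpleGraph V) [DecidableRel G.Adj]
    (f : V → ℤ) : Matrix V V ℤ :=
  fun v w => if v = w then f v else if G.Adj v w then 1 else 0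

/-- The coefficientwise identity relating `Ẑ^{osp(1|2)}` and `Ẑ^{sl(2)}` for a plumbed
3-manifold: for `l = 2b + B(s − 𝟙) + 2Bk`,
`F^+_l = −(√−1)^{(2b+B(s−𝟙))^t 𝟙} · (−1)^{−k^t B k + k^t(2b+B(s−𝟙))} · F^−_l`. -/
theorem statement16 {V : Type} [Fintype V] [DecidableEq V] [Nonempty V]
    (G : SimpleGraph V) [DecidableRel G.Adj] (hG : G.IsTree) (f : V → ℤ)
    (s : V → ℤ)
    (hs : ∀ i, (∑ j, plumbing G f i j * s j) ≡ plumbing G f i i [ZMOD 2])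
    (b k : V → ℤ)
    (l : V → ℤ)
    (hl : ∀ v, l v = 2 * b v + (∑ w, plumbing G f v w * (s w - 1))
      + 2 * ∑ w, plumbing G f v w * k w) :
    ∏ v, cplus (G.degree v) (l v)
      = -(Complex.I ^ (∑ i, (2 * b i + ∑ j, plumbing G f i j * (s j - 1)))) *
          ((-1 : ℂ) ^ (-(∑ i, ∑ j, k i * plumbing G f i j * k j)
            + ∑ i, k i * (2 * b i + ∑ j, plumbing G f i j * (s j - 1)))) *
          ∏ v, cminus (G.degree v) (l v) := by
  classical
  set U : ℤ := ∑ i, (2 * b i + ∑ j, plumbing G f i j * (s j - 1)) with hU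
  set E : ℤ := -(∑ i, ∑ j, k i * plumbing G f i j * k j)
      + ∑ i, k i * (2 * b i + ∑ j, plumbing G f i j * (s j - 1)) with hE
  set T : ℤ := ∑ v, ∑ w, plumbing G f v w * k w with hT
  have hBsym : ∀ i j, plumbing G f i j = plumbing G f j i := by
    intro i j
    rcases eq_or_ne i j with h | h
    · rw [h]
    · unfold plumbing
      rw [if_neg h, if_neg (Ne.symm h), if_congr (G.adj_comm i j) rfl rfl]
  have hL : (∑ v, l v) = U + 2 * T := by
    rw [Finset.sum_congr rfl (fun v _ => hl v), Finset.sum_add_distrib, ← Finset.mul_sum]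
  have hpar : (2:ℤ) ∣ (U + T + E) := by
    rw [show (2:ℤ) = ((2:ℕ):ℤ) from rfl, ← ZMod.intCast_zmod_eq_zero_iff_dvd]
    rw [hU, hT, hE]
    push_cast
    simp only [show (2 : ZMod 2) = 0 by decide, zero_mul, zero_add, mul_zero]
    have hβs : ∀ i, (∑ j, ((plumbing G f i j : ℤ) : ZMod 2) * ((s j : ℤ) : ZMod 2))
        = ((plumbing G f i i : ℤ) : ZMod 2) := by
      intro i
      have h := (ZMod.intCast_eq_intCast_iff _ _ 2).mpr (hs i)
      push_cast at h
      exact h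
    have e1 : ∀ i, (∑ j, ((plumbing G f i j : ℤ) : ZMod 2) * (((s j : ℤ) : ZMod 2) - 1))
        = ((plumbing G f i i : ℤ) : ZMod 2)
          - ∑ j, ((plumbing G f i j : ℤ) : ZMod 2) := by
      intro i
      simp only [mul_sub, mul_one]
      rw [Finset.sum_sub_distrib, hβs i]
    simp only [e1]
    have hsq : ∀ x : ZMod 2, x * x = x := by decide
    have hA : (∑ i : V, ∑ j : V, ((plumbing G f i j : ℤ) : ZMod 2))
        = ∑ i : V, ((plumbing G f i i : ℤ) : ZMod 2) :=
      sum_sym_zmod _ (fun i j => by rw [hBsym i j])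
    have hBk : (∑ i : V, ∑ j : V, ((k i : ℤ) : ZMod 2) * ((plumbing G f i j : ℤ) : ZMod 2)
          * ((k j : ℤ) : ZMod 2))
        = ∑ i : V, ((k i : ℤ) : ZMod 2) * ((plumbing G f i i : ℤ) : ZMod 2) := by
      rw [sum_sym_zmod (fun i j => ((k i : ℤ) : ZMod 2) * ((plumbing G f i j : ℤ) : ZMod 2)
          * ((k j : ℤ) : ZMod 2)) (fun i j => by rw [hBsym i j]; ring)]
      refine Finset.sum_congr rfl fun i _ => ?_
      calc ((k i : ℤ) : ZMod 2) * ((plumbing G f i i : ℤ) : ZMod 2) * ((k i : ℤ) : ZMod 2)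
          = ((k i : ℤ) : ZMod 2) * ((k i : ℤ) : ZMod 2) * ((plumbing G f i i : ℤ) : ZMod 2) := by
            ring
        _ = ((k i : ℤ) : ZMod 2) * ((plumbing G f i i : ℤ) : ZMod 2) := by rw [hsq]
    have hswap : (∑ i : V, ∑ j : V, ((plumbing G f i j : ℤ) : ZMod 2) * ((k j : ℤ) : ZMod 2))
        = ∑ i : V, ∑ j : V, ((k i : ℤ) : ZMod 2) * ((plumbing G f i j : ℤ) : ZMod 2) := by
      rw [Finset.sum_comm]
      exact Finset.sum_congr rfl fun i _ => Finset.sum_congr rfl fun j _ => by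
        rw [hBsym j i]; ring
    simp only [mul_sub, Finset.mul_sum]
    rw [Finset.sum_sub_distrib, Finset.sum_sub_distrib, hA, hswap, hBk]
    ring
  obtain ⟨m, hm⟩ := hpar
  have hprod : ∏ v, cplus (G.degree v) (l v)
      = Complex.I ^ ((2:ℤ) - ∑ v, l v) * ∏ v, cminus (G.degree v) (l v) := by
    rw [Finset.prod_congr rfl (fun v _ => key (G.degree v) (l v)),
      Finset.prod_mul_distrib, prod_I_zpow]
    congr 2
    have hcard : G.edgeFinset.card + 1 = Fintype.card V := hG.card_edgeFinset
    have hdeg : ∑ v, G.degree v = 2 * G.edgeFinset.card :=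
      G.sum_degrees_eq_twice_card_edges
    have h1 : ∑ v, ((2:ℤ) - G.degree v - l v)
        = 2 * (Fintype.card V : ℤ) - (↑(∑ v, G.degree v) : ℤ) - ∑ v, l v := by
      rw [Finset.sum_sub_distrib, Finset.sum_sub_distrib, Finset.sum_const,
        Finset.card_univ]
      push_cast
      ring
    rw [h1, hdeg]
    push_cast
    omega
  have hfac : Complex.I ^ ((2:ℤ) - (U + 2*T)) = -(Complex.I ^ U) * ((-1:ℂ)) ^ E := by
    rw [show (-1 : ℂ) = Complex.I ^ (2:ℤ) from I_zpow_two.symm, ← zpow_mul,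
      show -(Complex.I ^ U) = Complex.I ^ ((2:ℤ) + U) by
        rw [zpow_add₀ Complex.I_ne_zero, I_zpow_two]; ring,
      ← zpow_add₀ Complex.I_ne_zero,
      show (2:ℤ) + U + 2 * E = (2 - (U + 2*T)) + 4 * m by omega,
      I_zpow_add_four]
  rw [hprod, hL, hfac]
end
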